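/- arXiv:2603.21062 — 3 statements merged into one kernel-verified Lean document; each statement's English description precedes it below -/
import Mathlib

section
/- Let ψ : [0,∞) → [0,∞) be a sub-root function (nonnegative, nondecreasing, and r ↦ ψ(r)/√r nonincreasing on (0,∞)) with unique fixed point r*. For any a ≥ 0, the function r ↦ ψ(r) + a is also sub-root, and its fixed point r*_a satisfies r* ≤ r*_a ≤ r* + 2a. -/
/-- A sub-root function: nonnegative, nondecreasing on `[0,∞)`, and `ψ r / √r`
nonincreasing on `(0,∞)`. -/
def SubRoot (ψ : ℝ → ℝ) : Prop :=
  (∀ r, 0 ≤ r → 0 ≤ ψ r) ∧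
  (∀ r s, 0 ≤ r → r ≤ s → ψ r ≤ ψ s) ∧
  (∀ r s, 0 < r → r ≤ s → ψ s / Real.sqrt s ≤ ψ r / Real.sqrt r)

theorem stmt2 (ψ : ℝ → ℝ) (hψ : SubRoot ψ) (rstar : ℝ) (hrpos : 0 < rstar)
    (hfix : ψ rstar = rstar) (a : ℝ) (ha : 0 ≤ a)
    (ra : ℝ) (hrapos : 0 < ra) (hfixa : ψ ra + a = ra) :
    SubRoot (fun r => ψ r + a) ∧ rstar ≤ ra ∧ ra ≤ rstar + 2 * a := by
  obtain ⟨h0, hmono, hdiv⟩ := hψ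
  have hsub : SubRoot (fun r => ψ r + a) := by
    refine ⟨fun r hr => by have := h0 r hr; positivity,
      fun r s hr hrs => by simpa using add_le_add_right (hmono r s hr hrs) a,
      fun r s hr hrs => ?_⟩
    have hsr : (0:ℝ) < Real.sqrt r := Real.sqrt_pos.mpr hr
    have hss : (0:ℝ) < Real.sqrt s := Real.sqrt_pos.mpr (lt_of_lt_of_le hr hrs)
    have h1 := hdiv r s hr hrs
    have h2 : a / Real.sqrt s ≤ a / Real.sqrt r :=
      div_le_div_of_nonneg_left ha hsr (Real.sqrt_le_sqrt hrs)
    simp only [add_div]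
    linarith
  have hψra : ψ ra = ra - a := by linarith
  have hsrp : (0:ℝ) < Real.sqrt rstar := Real.sqrt_pos.mpr hrpos
  have hsap : (0:ℝ) < Real.sqrt ra := Real.sqrt_pos.mpr hrapos
  have hdr : rstar / Real.sqrt rstar = Real.sqrt rstar := Real.div_sqrt
  have hda : ra / Real.sqrt ra = Real.sqrt ra := Real.div_sqrt
  have hle : rstar ≤ ra := by
    rcases le_or_gt rstar ra with h | h
    · exact h
    · have h1 := hdiv ra rstar hrapos h.le
      rw [hfix, hψra, hdr] at h1
      have h2 : (ra - a) / Real.sqrt ra ≤ ra / Real.sqrt ra := by gcongr; linarith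
      rw [hda] at h2
      have h3 : Real.sqrt rstar ≤ Real.sqrt ra := le_trans h1 h2
      have hs1 := Real.sq_sqrt hrpos.le
      have hs2 := Real.sq_sqrt hrapos.le
      nlinarith [Real.sqrt_nonneg rstar]
  refine ⟨hsub, hle, ?_⟩
  have h1 := hdiv rstar ra hrpos hle
  rw [hfix, hψra, hdr] at h1
  have h2 : ra - a ≤ Real.sqrt rstar * Real.sqrt ra := by
    have := (div_le_iff₀ hsap).mp h1
    linarith
  have hs1 := Real.sq_sqrt hrpos.le
  have hs2 := Real.sq_sqrt hrapos.le
  nlinarith [sq_nonneg (Real.sqrt rstar - Real.sqrt ra)]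
end

section
/- Let ψ : [0,∞) → [0,∞) be a sub-root function with unique fixed point r*. For any b ≥ 1, the function ψ_b(r) = b·ψ(r) is also sub-root, and its fixed point r*_b satisfies r*_b ≤ b²·r*. -/
theorem stmt3 (ψ : ℝ → ℝ) (hψ : SubRoot ψ) (rstar : ℝ) (hrpos : 0 < rstar)
    (hfix : ψ rstar = rstar) (b : ℝ) (hb : 1 ≤ b)
    (rb : ℝ) (hrbpos : 0 < rb) (hfixb : b * ψ rb = rb) :
    SubRoot (fun r => b * ψ r) ∧ rb ≤ b ^ 2 * rstar := by
  obtain ⟨h0, hmono, hdec⟩ := hψ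
  have hb0 : (0:ℝ) < b := lt_of_lt_of_le one_pos hb
  constructor
  · refine ⟨fun r hr => mul_nonneg hb0.le (h0 r hr),
      fun r s hr hrs => by
        exact mul_le_mul_of_nonneg_left (hmono r s hr hrs) hb0.le,
      fun r s hr hrs => ?_⟩
    simp only [mul_div_assoc]
    exact mul_le_mul_of_nonneg_left (hdec r s hr hrs) hb0.le
  · rcases le_total rb rstar with h | h
    · nlinarith [sq_nonneg (b - 1), sq_nonneg (b + 1)]
    · have key : ψ rb / Real.sqrt rb ≤ ψ rstar / Real.sqrt rstar :=
        hdec rstar rb hrpos h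
      have hsr : Real.sqrt rstar > 0 := Real.sqrt_pos.mpr hrpos
      have hsb : Real.sqrt rb > 0 := Real.sqrt_pos.mpr hrbpos
      have hst : ψ rstar / Real.sqrt rstar = Real.sqrt rstar := by
        rw [hfix, Real.div_sqrt]
      rw [hst] at key
      have hψrb : ψ rb ≤ Real.sqrt rstar * Real.sqrt rb := by
        rw [div_le_iff₀ hsb] at key; linarith
      have h1 : rb ≤ b * Real.sqrt rstar * Real.sqrt rb := by nlinarith
      have h2 : Real.sqrt rb ≤ b * Real.sqrt rstar :=
        le_of_mul_le_mul_right (by rw [Real.mul_self_sqrt hrbpos.le]; linarith) hsb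
      calc rb = Real.sqrt rb * Real.sqrt rb := (Real.mul_self_sqrt hrbpos.le).symm
        _ ≤ (b * Real.sqrt rstar) * (b * Real.sqrt rstar) :=
            mul_le_mul h2 h2 hsb.le (by positivity)
        _ = b ^ 2 * (Real.sqrt rstar * Real.sqrt rstar) := by ring
        _ = b ^ 2 * rstar := by rw [Real.mul_self_sqrt hrpos.le]
end

section
/- Let ψ : [0,∞) → [0,∞) be a sub-root function with unique fixed point r*. For any b ≥ 1 and c ≥ 0, the function r ↦ ψ(b·r + c) is also sub-root, and its fixed point r*_{b,c} satisfies r*_{b,c} ≤ b·r* + 2c/b. -/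
theorem stmt4 (ψ : ℝ → ℝ) (hψ : SubRoot ψ) (rstar : ℝ) (hrpos : 0 < rstar)
    (hfix : ψ rstar = rstar) (b c : ℝ) (hb : 1 ≤ b) (hc : 0 ≤ c)
    (rbc : ℝ) (hrbcpos : 0 < rbc) (hfixbc : ψ (b * rbc + c) = rbc) :
    SubRoot (fun r => ψ (b * r + c)) ∧ rbc ≤ b * rstar + 2 * c / b := by
  obtain ⟨h0, h1, h2⟩ := hψ
  have hbpos : (0:ℝ) < b := lt_of_lt_of_le one_pos hb
  constructor
  · refine ⟨?_, ?_, ?_⟩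
    · intro r hr
      exact h0 _ (by nlinarith)
    · intro r s hr hrs
      exact h1 _ _ (by nlinarith) (by nlinarith)
    · intro r s hr hrs
      have hspos : 0 < s := lt_of_lt_of_le hr hrs
      set u := b * r + c with hu
      set v := b * s + c with hv
      have hupos : 0 < u := by nlinarith
      have hvpos : 0 < v := by nlinarith
      have huv : u ≤ v := by nlinarith
      have hq : ψ v / Real.sqrt v ≤ ψ u / Real.sqrt u := h2 _ _ hupos huv
      have hs1 : Real.sqrt v / Real.sqrt s ≤ Real.sqrt u / Real.sqrt r := by
        rw [← Real.sqrt_div hvpos.le, ← Real.sqrt_div hupos.le]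
        apply Real.sqrt_le_sqrt
        rw [div_le_div_iff₀ hspos hr]
        nlinarith
      have hsv : (0:ℝ) < Real.sqrt v := Real.sqrt_pos.mpr hvpos
      have hsu : (0:ℝ) < Real.sqrt u := Real.sqrt_pos.mpr hupos
      have hss : (0:ℝ) < Real.sqrt s := Real.sqrt_pos.mpr hspos
      have hsr : (0:ℝ) < Real.sqrt r := Real.sqrt_pos.mpr hr
      have e1 : ψ v / Real.sqrt s = (ψ v / Real.sqrt v) * (Real.sqrt v / Real.sqrt s) := by
        field_simp
      have e2 : ψ u / Real.sqrt r = (ψ u / Real.sqrt u) * (Real.sqrt u / Real.sqrt r) := by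
        field_simp
      simp only
      rw [← hu, ← hv, e1, e2]
      exact mul_le_mul hq hs1 (by positivity) (div_nonneg (h0 _ hupos.le) hsu.le)
  · set t := b * rbc + c with ht
    have htpos : 0 < t := by nlinarith
    rcases le_or_gt rstar t with hcase | hcase
    · -- rbc = ψ t ≤ √(r* t)
      have hq : ψ t / Real.sqrt t ≤ ψ rstar / Real.sqrt rstar := h2 _ _ hrpos hcase
      have hst : (0:ℝ) < Real.sqrt t := Real.sqrt_pos.mpr htpos
      have hsr : (0:ℝ) < Real.sqrt rstar := Real.sqrt_pos.mpr hrpos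
      have hle : rbc ≤ Real.sqrt rstar * Real.sqrt t := by
        rw [hfixbc, hfix] at hq
        have := (div_le_div_iff₀ hst hsr).mp hq
        have hrr : rstar = Real.sqrt rstar * Real.sqrt rstar :=
          (Real.mul_self_sqrt hrpos.le).symm
        nlinarith
      have hsq : rbc ^ 2 ≤ rstar * t := by
        have h2' : (Real.sqrt rstar * Real.sqrt t) ^ 2 = rstar * t := by
          rw [mul_pow, Real.sq_sqrt hrpos.le, Real.sq_sqrt htpos.le]
        nlinarith [Real.sqrt_nonneg rstar, Real.sqrt_nonneg t]
      by_contra hgt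
      push_neg at hgt
      have hbd : b * (2 * c / b) = 2 * c := by field_simp
      have hgt2 : b ^ 2 * rstar + 2 * c < b * rbc := by nlinarith [hbd]
      have hrgt : b * rstar < rbc := by nlinarith [mul_pos hbpos hrpos]
      nlinarith [mul_lt_mul_of_pos_right hgt2 hrbcpos,
        mul_le_mul_of_nonneg_left hsq hbpos.le,
        mul_nonneg hc (by nlinarith : (0:ℝ) ≤ 2 * rbc - b * rstar)]
    · -- t < r* : rbc = ψ t ≤ ψ r* = r*
      have : rbc ≤ rstar := by
        rw [← hfixbc, ← hfix]; exact h1 _ _ htpos.le hcase.le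
      have h2cb : 0 ≤ 2 * c / b := by positivity
      nlinarith
end
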